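/- For every z ∈ 𝔻, the coherent state wave function is normalized: ∫₀^∞ |Ψ_{ν,m;z}(ξ)|² dξ/ξ = 1, where Ψ_{ν,m;z}(ξ) = (−1)^m (m!/Γ(2ν−m))^{1/2} |1−z|^{2m} (1−z)^{−2ν} (1−|z|²)^{ν−m} ξ^{ν−m} exp(−(ξ/2)(1+z)/(1−z)) L_m^{(α)}(ξ(1−|z|²)/|1−z|²). -/

import Mathlib

open MeasureTheory Complex Real Set

noncomputable section

/-- The measure `dξ/ξ` on `(0,∞)`. -/
def mIoi : Measure ℝ :=
  (volume.restrict (Set.Ioi (0:ℝ))).withDensity (fun ξ => ENNReal.ofReal ξ⁻¹)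

/-- The weighted measure `(1-|z|²)^{2ν-2} dμ(z)` on the unit disk. -/
def mD (ν : ℝ) : Measure ℂ :=
  (volume.restrict {z : ℂ | ‖z‖ < 1}).withDensity
    (fun z => ENNReal.ofReal ((1 - ‖z‖ ^ 2) ^ (2*ν - 2)))

/-- Generalized Laguerre polynomial `L_n^{(α)}(x)`. -/
def lag (α : ℝ) (n : ℕ) (x : ℝ) : ℝ :=
  ∑ j ∈ Finset.range (n+1),
    (-1)^j * (Real.Gamma (n + α + 1) /
      (Real.Gamma (j + α + 1) * (Nat.factorial (n - j)) * (Nat.factorial j))) * x ^ j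

/-- Jacobi polynomial `P_n^{(a,b)}(x)`. -/
def jac (a b : ℝ) (n : ℕ) (x : ℝ) : ℝ :=
  ∑ s ∈ Finset.range (n+1),
    (Real.Gamma (n + a + 1) / (Real.Gamma (a + s + 1) * (Nat.factorial (n - s)))) *
    (Real.Gamma (n + b + 1) / (Real.Gamma (n + b - s + 1) * (Nat.factorial s))) *
    ((x - 1)/2)^s * ((x + 1)/2)^(n - s)

/-- The eigenfunctions `φ_k^{ν,m}`. -/
def phiE (ν : ℝ) (m k : ℕ) (z : ℂ) : ℂ :=
  (-1)^(min m k) * ((((1 - ‖z‖ ^ 2) ^ m)⁻¹ : ℝ) : ℂ) *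
    (if k ≤ m then (starRingEnd ℂ z)^(m - k) else z^(k - m)) *
    ((jac ((max m k - min m k : ℕ) : ℝ) (2*(ν - m) - 1) (min m k)
        (1 - 2 * ‖z‖ ^ 2) : ℝ) : ℂ)

/-- The square norms `ρ_k^{ν,m}`. -/
def rhoN (ν : ℝ) (m k : ℕ) : ℝ :=
  (π / (2*(ν - m) - 1)) *
    ((Nat.factorial (max m k)) * Real.Gamma (2*(ν - m) + min m k)) /
    ((Nat.factorial (min m k)) * Real.Gamma (2*(ν - m) + max m k))

/-- The Laguerre basis functions `ψ_{ν,m;k}` of `L²((0,∞), dξ/ξ)`. -/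
def psiF (ν : ℝ) (m k : ℕ) (ξ : ℝ) : ℝ :=
  Real.sqrt (Nat.factorial k / Real.Gamma (2*(ν - m) + k)) * ξ ^ (ν - (m:ℝ)) *
    Real.exp (-ξ/2) * lag (2*(ν - m) - 1) k ξ

/-- The kernel of the integral defining the generalized second Bargmann transform. -/
def WKer (ν : ℝ) (m : ℕ) (z : ℂ) (ξ : ℝ) : ℂ :=
  ((ξ ^ (ν - (m:ℝ)) : ℝ) : ℂ) *
    Complex.exp (-(ξ:ℂ)/2 * ((1 + z)/(1 - z))) *
    ((lag (2*(ν - m) - 1) m (ξ * (1 - ‖z‖ ^ 2) / ‖1 - z‖ ^ 2) : ℝ) : ℂ)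

/-- The generalized second Bargmann transform `W_{ν,m}`. -/
def W (ν : ℝ) (m : ℕ) (φ : ℝ → ℂ) (z : ℂ) : ℂ :=
  (Real.sqrt ((2*(ν - m) - 1) * Nat.factorial m / (π * Real.Gamma (2*ν - m))) : ℂ) *
  (((‖1 - z‖ / (1 - ‖z‖ ^ 2)) ^ (2*m) : ℝ) : ℂ) *
  (1 - z) ^ ((-(2*ν) : ℝ) : ℂ) *
  ∫ ξ, WKer ν m z ξ * φ ξ ∂mIoi

/-- The coherent state wave functions `Ψ_{ν,m;z}`. -/
def PsiCS (ν : ℝ) (m : ℕ) (z : ℂ) (ξ : ℝ) : ℂ :=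
  (-1)^m * (Real.sqrt (Nat.factorial m / Real.Gamma (2*ν - m)) : ℂ) *
  ((‖1 - z‖ ^ (2*m) : ℝ) : ℂ) * (1 - z) ^ ((-(2*ν) : ℝ) : ℂ) *
  (((1 - ‖z‖ ^ 2) ^ (ν - (m:ℝ)) : ℝ) : ℂ) * ((ξ ^ (ν - (m:ℝ)) : ℝ) : ℂ) *
  Complex.exp (-(ξ:ℂ)/2 * ((1 + z)/(1 - z))) *
  ((lag (2*(ν - m) - 1) m (ξ * (1 - ‖z‖ ^ 2) / ‖1 - z‖ ^ 2) : ℝ) : ℂ)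

/-- The reproducing kernel `K_m^ν(z,w)`. -/
def KK (ν : ℝ) (m : ℕ) (z w : ℂ) : ℂ :=
  (((2*(ν - m) - 1) / π : ℝ) : ℂ) *
  (1 - z * (starRingEnd ℂ w)) ^ ((-(2*ν) : ℝ) : ℂ) *
  (((‖1 - z * (starRingEnd ℂ w)‖ ^ 2 /
      ((1 - ‖z‖ ^ 2) * (1 - ‖w‖ ^ 2))) ^ m : ℝ) : ℂ) *
  ((jac 0 (2*(ν - m) - 1) m
      (2 * (1 - ‖z‖ ^ 2) * (1 - ‖w‖ ^ 2) /
        ‖1 - z * (starRingEnd ℂ w)‖ ^ 2 - 1) : ℝ) : ℂ)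

/-- Wirtinger derivative `∂/∂z`. -/
def wirtZ (f : ℂ → ℂ) (z : ℂ) : ℂ :=
  (fderiv ℝ f z 1 - Complex.I * fderiv ℝ f z Complex.I) / 2

/-- Wirtinger derivative `∂/∂z̄`. -/
def wirtZbar (f : ℂ → ℂ) (z : ℂ) : ℂ :=
  (fderiv ℝ f z 1 + Complex.I * fderiv ℝ f z Complex.I) / 2

/-- The magnetic Schrödinger-type operator `H_ν`. -/
def Hop (ν : ℝ) (f : ℂ → ℂ) (z : ℂ) : ℂ :=
  -4 * (((1 - ‖z‖ ^ 2 : ℝ)) : ℂ) *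
    ((((1 - ‖z‖ ^ 2 : ℝ)) : ℂ) * wirtZ (wirtZbar f) z
      - 2*(ν:ℂ) * (starRingEnd ℂ z) * wirtZbar f z)

end

/-!
Put `t = Re((1 + z)/(1 - z)) = (1 - |z|²)/|1 - z|² > 0` and `α = 2(ν - m) - 1`. Then
`|Ψ_{ν,m;z}(ξ)|² = (m!/Γ(2ν - m)) (tξ)^{α+1} e^{-tξ} L_m^{(α)}(tξ)²`, and since `dξ/ξ` is
invariant under `ξ ↦ tξ` the integral equals `(m!/Γ(2ν - m)) ∫₀^∞ e^{-u} u^α L_m^{(α)}(u)² du`.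
This is the Laguerre norm `Γ(m + α + 1)/m!`, and `m + α + 1 = 2ν - m`.

For the Laguerre norm, expand one factor `L_m^{(α)}` in powers `u^i`: by `Γ(s + i) = (s)_i Γ(s)`,
`∫₀^∞ e^{-u} u^{α+i} L_m^{(α)}(u) du` is `Γ(m + α + 1)/m!` times the alternating binomial sum
`∑_j (-1)^j C(m,j) (α + 1 + j)_i`, an `m`-th forward difference of a polynomial of degree `i` in `j`.
It vanishes for `i < m` and equals `(-1)^m m!` for `i = m`.
-/

open Finset Polynomial

theorem sum_range_neg_one_pow_mul_choose_mul {R : Type*} [CommRing R] (f : R → R) (n : ℕ) :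
    ∑ j ∈ range (n + 1), (-1 : R) ^ j * n.choose j * f j = (-1) ^ n * (fwdDiff 1)^[n] f 0 := by
  rw [fwdDiff_iter_eq_sum_shift, mul_sum]
  refine sum_congr rfl fun j hj => ?_
  obtain ⟨k, rfl⟩ := Nat.exists_eq_add_of_le (Nat.lt_succ_iff.mp (mem_range.mp hj))
  simp only [Nat.add_sub_cancel_left, zero_add, nsmul_eq_mul, mul_one, zsmul_eq_mul]
  push_cast
  have hsign : (-1 : R) ^ (j + k) * (-1) ^ k = (-1) ^ j := by
    rw [pow_add, mul_assoc, ← pow_add, ← two_mul, pow_mul, neg_one_sq, one_pow, mul_one]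
  linear_combination (-(((j + k).choose j : R) * f j)) * hsign

theorem sum_range_neg_one_pow_mul_choose_mul_ascPochhammer {R : Type*} [CommRing R] [IsDomain R]
    {i n : ℕ} (hi : i ≤ n) (y : R) :
    ∑ j ∈ range (n + 1), (-1 : R) ^ j * n.choose j * (ascPochhammer R i).eval (y + j)
      = if i = n then (-1 : R) ^ n * n.factorial else 0 := by
  set P : R[X] := (ascPochhammer R i).comp (X + C y)
  have hP : P.natDegree = i := by
    simp [P, natDegree_comp, ascPochhammer_natDegree]
  have hPmonic : P.Monic :=
    (monic_ascPochhammer R i).comp (monic_X_add_C y) (by simp)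
  have hPeval (x : R) : P.eval x = (ascPochhammer R i).eval (y + x) := by
    simp [P, eval_comp, add_comm]
  simp_rw [← hPeval]
  rw [sum_range_neg_one_pow_mul_choose_mul P.eval]
  split_ifs with h
  · rw [← h, ← hP, fwdDiff_iter_degree_eq_factorial, hPmonic.leadingCoeff]
    simp
  · rw [fwdDiff_iter_eq_zero_of_degree_lt (hP ▸ lt_of_le_of_ne hi h)]
    simp

theorem Real.Gamma_add_nat_eq_ascPochhammer_mul {x : ℝ} (hx : ∀ k : ℕ, x ≠ -k) (n : ℕ) :
    Real.Gamma (x + n) = (ascPochhammer ℝ n).eval x * Real.Gamma x := by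
  induction n with
  | zero => simp
  | succ n ih =>
    have hxn : x + n ≠ 0 := fun h => hx n (by linarith)
    rw [Nat.cast_succ, ← add_assoc, Real.Gamma_add_one hxn, ih, ascPochhammer_succ_eval]
    ring

noncomputable def lagCoeff (α : ℝ) (n j : ℕ) : ℝ :=
  (-1) ^ j * (Real.Gamma (n + α + 1) / (Real.Gamma (j + α + 1) * (n - j).factorial * j.factorial))

theorem lag_eq_sum (α : ℝ) (n : ℕ) (x : ℝ) :
    lag α n x = ∑ j ∈ range (n + 1), lagCoeff α n j * x ^ j := rfl

theorem lagCoeff_self {α : ℝ} (hα : -1 < α) (n : ℕ) :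
    lagCoeff α n n = (-1) ^ n / n.factorial := by
  have hΓ : Real.Gamma (n + α + 1) ≠ 0 :=
    (Real.Gamma_pos_of_pos (by linarith [n.cast_nonneg (α := ℝ)])).ne'
  simp only [lagCoeff, Nat.sub_self, Nat.factorial_zero, Nat.cast_one, mul_one]
  field_simp

theorem sum_lagCoeff_mul_Gamma {α : ℝ} (hα : -1 < α) {i n : ℕ} (hi : i ≤ n) :
    ∑ j ∈ range (n + 1), lagCoeff α n j * Real.Gamma (α + ↑(i + j) + 1)
      = if i = n then (-1) ^ n * Real.Gamma (n + α + 1) else 0 := by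
  have hterm : ∀ j ∈ range (n + 1), lagCoeff α n j * Real.Gamma (α + ↑(i + j) + 1)
      = Real.Gamma (n + α + 1) / n.factorial *
        ((-1) ^ j * n.choose j * (ascPochhammer ℝ i).eval (α + 1 + j)) := by
    intro j hj
    have hjn : j ≤ n := Nat.lt_succ_iff.mp (mem_range.mp hj)
    have hpos : 0 < α + 1 + j := by linarith [j.cast_nonneg (α := ℝ)]
    have hΓ : Real.Gamma (α + ↑(i + j) + 1)
        = (ascPochhammer ℝ i).eval (α + 1 + j) * Real.Gamma (j + α + 1) := by
      rw [show α + ↑(i + j) + 1 = α + 1 + j + i by push_cast; ring,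
        Real.Gamma_add_nat_eq_ascPochhammer_mul fun k hk => by linarith [k.cast_nonneg (α := ℝ)]]
      ring_nf
    rw [hΓ, lagCoeff, Nat.cast_choose ℝ hjn]
    have hΓj : Real.Gamma (j + α + 1) ≠ 0 := (Real.Gamma_pos_of_pos (by linarith)).ne'
    field_simp
  rw [sum_congr rfl hterm, ← mul_sum, sum_range_neg_one_pow_mul_choose_mul_ascPochhammer hi]
  split_ifs
  · field_simp
  · simp

theorem integral_exp_neg_mul_rpow_mul_sum {ι : Type*} {α : ℝ} (hα : -1 < α) (s : Finset ι)
    (a : ι → ℝ) (e : ι → ℕ) :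
    ∫ u in Ioi 0, Real.exp (-u) * u ^ α * ∑ k ∈ s, a k * u ^ e k
      = ∑ k ∈ s, a k * Real.Gamma (α + e k + 1) := by
  have hpt : ∀ u ∈ Ioi (0 : ℝ), Real.exp (-u) * u ^ α * ∑ k ∈ s, a k * u ^ e k
      = ∑ k ∈ s, a k * (Real.exp (-u) * u ^ ((α + e k + 1) - 1)) := by
    intro u hu
    rw [mul_sum]
    refine sum_congr rfl fun k _ => ?_
    rw [add_sub_cancel_right, rpow_add hu, rpow_natCast]
    ring
  have hpos : ∀ k, 0 < α + e k + 1 := fun k => by linarith [(e k).cast_nonneg (α := ℝ)]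
  rw [setIntegral_congr_fun measurableSet_Ioi hpt,
    integral_finsetSum _ fun k _ => (GammaIntegral_convergent (hpos k)).const_mul _]
  simp_rw [integral_const_mul, ← Gamma_eq_integral (hpos _)]

theorem integral_exp_neg_mul_rpow_mul_lag_sq {α : ℝ} (hα : -1 < α) (n : ℕ) :
    ∫ u in Ioi 0, Real.exp (-u) * u ^ α * lag α n u ^ 2
      = Real.Gamma (n + α + 1) / n.factorial := by
  have hsq : ∀ u : ℝ, lag α n u ^ 2 = ∑ p ∈ range (n + 1) ×ˢ range (n + 1),
      lagCoeff α n p.1 * lagCoeff α n p.2 * u ^ (p.1 + p.2) := by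
    intro u
    rw [sq, lag_eq_sum, sum_mul_sum, ← sum_product']
    refine sum_congr rfl fun p _ => ?_
    ring
  simp_rw [hsq]
  rw [integral_exp_neg_mul_rpow_mul_sum hα, sum_product]
  have hinner : ∀ i ∈ range (n + 1),
      ∑ j ∈ range (n + 1), lagCoeff α n i * lagCoeff α n j * Real.Gamma (α + ↑(i + j) + 1)
        = lagCoeff α n i * if i = n then (-1) ^ n * Real.Gamma (n + α + 1) else 0 := by
    intro i hi
    simp_rw [mul_assoc, ← mul_sum]
    rw [sum_lagCoeff_mul_Gamma hα (Nat.lt_succ_iff.mp (mem_range.mp hi))]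
  rw [sum_congr rfl hinner]
  simp_rw [mul_ite, mul_zero]
  rw [sum_ite_eq' _ _ _, if_pos (self_mem_range_succ n), lagCoeff_self hα, div_mul_eq_mul_div,
    ← mul_assoc, ← pow_add, ← two_mul, pow_mul, neg_one_sq, one_pow, one_mul]

theorem Complex.re_one_add_div_one_sub (z : ℂ) :
    ((1 + z) / (1 - z)).re = (1 - ‖z‖ ^ 2) / ‖1 - z‖ ^ 2 := by
  rw [Complex.div_re, Complex.sq_norm, Complex.sq_norm, ← add_div]
  congr 1
  simp [Complex.normSq_apply]
  ring

theorem integral_mIoi (f : ℝ → ℝ) : ∫ ξ, f ξ ∂mIoi = ∫ ξ in Ioi 0, f ξ / ξ := by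
  rw [mIoi, integral_withDensity_eq_integral_toReal_smul (by fun_prop)
    (Filter.Eventually.of_forall fun _ => ENNReal.ofReal_lt_top)]
  refine setIntegral_congr_fun measurableSet_Ioi fun ξ hξ => ?_
  rw [ENNReal.toReal_ofReal (inv_nonneg.mpr (le_of_lt hξ)), smul_eq_mul, div_eq_inv_mul]

theorem one_sub_sq_norm_div_sq_norm_one_sub_pos {z : ℂ} (hz : ‖z‖ < 1) :
    0 < (1 - ‖z‖ ^ 2) / ‖1 - z‖ ^ 2 :=
  div_pos (by nlinarith [norm_nonneg z])
    (pow_pos (norm_pos_iff.mpr (sub_ne_zero.mpr fun h => by simp [← h] at hz)) 2)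

theorem norm_PsiCS (ν : ℝ) (m : ℕ) {z : ℂ} (hz : ‖z‖ < 1) {ξ : ℝ} (hξ : 0 < ξ) :
    ‖PsiCS ν m z ξ‖ = Real.sqrt (m.factorial / Real.Gamma (2 * ν - m)) *
      (((1 - ‖z‖ ^ 2) / ‖1 - z‖ ^ 2 * ξ) ^ (ν - m) *
        Real.exp (-((1 - ‖z‖ ^ 2) / ‖1 - z‖ ^ 2 * ξ) / 2) *
        |lag (2 * (ν - m) - 1) m ((1 - ‖z‖ ^ 2) / ‖1 - z‖ ^ 2 * ξ)|) := by
  have hs : 0 < 1 - ‖z‖ ^ 2 := by nlinarith [norm_nonneg z]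
  have hw : 0 < ‖1 - z‖ := norm_pos_iff.mpr (sub_ne_zero.mpr fun h => by simp [← h] at hz)
  have hexp : (-(ξ : ℂ) / 2 * ((1 + z) / (1 - z))).re
      = -((1 - ‖z‖ ^ 2) / ‖1 - z‖ ^ 2 * ξ) / 2 := by
    rw [show -(ξ : ℂ) / 2 = ((-ξ / 2 : ℝ) : ℂ) by push_cast; ring, Complex.re_ofReal_mul,
      Complex.re_one_add_div_one_sub]
    ring
  have hpow : ‖1 - z‖ ^ (2 * m) * ‖1 - z‖ ^ (-(2 * ν)) * (1 - ‖z‖ ^ 2) ^ (ν - m) * ξ ^ (ν - m)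
      = ((1 - ‖z‖ ^ 2) / ‖1 - z‖ ^ 2 * ξ) ^ (ν - m) := by
    have hw2 : ‖1 - z‖ ^ (2 * m) * ‖1 - z‖ ^ (-(2 * ν)) = ((‖1 - z‖ ^ 2) ^ (ν - m))⁻¹ := by
      rw [← Real.rpow_natCast, ← Real.rpow_add hw, ← Real.rpow_natCast_mul hw.le,
        ← Real.rpow_neg hw.le]
      push_cast
      ring_nf
    rw [hw2, Real.mul_rpow (by positivity) hξ.le, Real.div_rpow hs.le (by positivity)]
    ring
  simp only [PsiCS, norm_mul, norm_pow, norm_neg, norm_one, one_pow, one_mul, Complex.norm_real,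
    Complex.norm_cpow_real, Complex.norm_exp, Real.norm_eq_abs, abs_norm, hexp]
  rw [abs_of_nonneg (Real.sqrt_nonneg _), abs_of_nonneg (Real.rpow_nonneg hs.le _),
    abs_of_nonneg (Real.rpow_nonneg hξ.le _),
    show ξ * (1 - ‖z‖ ^ 2) / ‖1 - z‖ ^ 2 = (1 - ‖z‖ ^ 2) / ‖1 - z‖ ^ 2 * ξ by ring, ← hpow]
  ring

theorem sq_norm_PsiCS_div {ν : ℝ} {m : ℕ} (hνm : (m : ℝ) < 2 * ν) {z : ℂ} (hz : ‖z‖ < 1)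
    {ξ : ℝ} (hξ : 0 < ξ) :
    ‖PsiCS ν m z ξ‖ ^ 2 / ξ = (1 - ‖z‖ ^ 2) / ‖1 - z‖ ^ 2 *
      (m.factorial / Real.Gamma (2 * ν - m) *
        (Real.exp (-((1 - ‖z‖ ^ 2) / ‖1 - z‖ ^ 2 * ξ)) *
          ((1 - ‖z‖ ^ 2) / ‖1 - z‖ ^ 2 * ξ) ^ (2 * (ν - m) - 1) *
          lag (2 * (ν - m) - 1) m ((1 - ‖z‖ ^ 2) / ‖1 - z‖ ^ 2 * ξ) ^ 2)) := by
  have hΓ : 0 < Real.Gamma (2 * ν - m) := Real.Gamma_pos_of_pos (by linarith)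
  have ht := one_sub_sq_norm_div_sq_norm_one_sub_pos hz
  rw [norm_PsiCS ν m hz hξ, mul_pow, mul_pow, mul_pow, Real.sq_sqrt (by positivity), sq_abs]
  generalize (1 - ‖z‖ ^ 2) / ‖1 - z‖ ^ 2 = t at ht ⊢
  have hu : 0 < t * ξ := mul_pos ht hξ
  have hpow : ((t * ξ) ^ (ν - m)) ^ 2 = (t * ξ) ^ (2 * (ν - m) - 1) * (t * ξ) := by
    rw [← Real.rpow_natCast, ← Real.rpow_mul hu.le, ← Real.rpow_add_one hu.ne']
    ring_nf
  have hexp : Real.exp (-(t * ξ) / 2) ^ 2 = Real.exp (-(t * ξ)) := by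
    rw [sq, ← Real.exp_add]
    ring_nf
  rw [hpow, hexp, div_eq_iff hξ.ne']
  ring

theorem stmt11_general (ν : ℝ) (m : ℕ) (hm : (m:ℝ) < ν - 1/2)
    (z : ℂ) (hz : ‖z‖ < 1) :
    ∫ ξ, ‖PsiCS ν m z ξ‖ ^ 2 ∂mIoi = 1 := by
  have ht := one_sub_sq_norm_div_sq_norm_one_sub_pos hz
  have hα : -1 < 2 * (ν - m) - 1 := by linarith
  have hΓ : 0 < Real.Gamma (2 * ν - m) := Real.Gamma_pos_of_pos (by linarith)
  rw [integral_mIoi, setIntegral_congr_fun measurableSet_Ioi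
      fun ξ hξ => sq_norm_PsiCS_div (by linarith) hz hξ,
    integral_const_mul, integral_comp_mul_left_Ioi (fun u => m.factorial / Real.Gamma (2 * ν - m) *
      (Real.exp (-u) * u ^ (2 * (ν - m) - 1) * lag (2 * (ν - m) - 1) m u ^ 2)) 0 ht, mul_zero,
    smul_eq_mul, integral_const_mul, integral_exp_neg_mul_rpow_mul_lag_sq hα,
    show m + (2 * (ν - m) - 1) + 1 = 2 * ν - m by ring, mul_inv_cancel_left₀ ht.ne']
  field_simp

/-- the coherent state wave functions are normalized:
`∫₀^∞ |Ψ_{ν,m;z}(ξ)|² dξ/ξ = 1` for every `z ∈ 𝔻`. -/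
theorem stmt11 (ν : ℝ) (hν : 1 < 2*ν) (m : ℕ) (hm : (m:ℝ) < ν - 1/2)
    (z : ℂ) (hz : ‖z‖ < 1) :
    ∫ ξ, ‖PsiCS ν m z ξ‖ ^ 2 ∂mIoi = 1 :=
  stmt11_general ν m hm z hz
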